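/- arXiv:2006.07457 — 3 statements merged into one kernel-verified Lean document; each statement's English description precedes it below -/
import Mathlib

section
/- Assume b > 0. For every ℓ ∈ {0, …, K} and every z with u_ℓ + b·h(ℓ) < z < u_{ℓ+1} + b·h(ℓ) (the lower constraint being vacuous when ℓ = 0 and the upper constraint vacuous when ℓ = K), the point x* = z − b·h(ℓ) is the unique minimizer over ℝ of the function x ↦ b·ρ_C(x) + (x − z)²/2. -/
/-!
At `x* = z − b·h(ℓ)` every knot `u_k` with `k ≤ ℓ` lies to the left of `x*` and every other knot
to the right, so `ρ_{τ_k,u_k}` has the supporting line of slope `τ_k`, resp. `τ_k − 1`, at `x*`.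
Weighting and summing, `h(ℓ)` is a subgradient of `ρ_C` at `x*`; since `x* − z = −b·h(ℓ)`, the
objective `b·ρ_C + (· − z)²/2` exceeds its value at `x*` by at least `(y − x*)²/2` at every `y`.
-/

/-- Single quantile loss `ρ_{τ,u}(x) = (x − u)(τ − 1{x ≤ u})`. -/
noncomputable def quantLoss (τ u x : ℝ) : ℝ := (x - u) * (τ - if x ≤ u then 1 else 0)

/-- Composite quantile loss `ρ_C(x) = Σ_{k=1}^K w_k ρ_{τ_k,u_k}(x)`. -/
noncomputable def compLoss (K : ℕ) (τ u w : ℕ → ℝ) (x : ℝ) : ℝ :=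
  ∑ k ∈ Finset.Icc 1 K, w k * quantLoss (τ k) (u k) x

/-- `h(ℓ) = Σ_{k=1}^ℓ w_k τ_k − Σ_{k=ℓ+1}^K w_k (1 − τ_k)`. -/
noncomputable def hFun (K : ℕ) (τ w : ℕ → ℝ) (ℓ : ℕ) : ℝ :=
  ∑ k ∈ Finset.Icc 1 ℓ, w k * τ k - ∑ k ∈ Finset.Icc (ℓ + 1) K, w k * (1 - τ k)

open Finset

lemma strictMonoOn_Icc_of_lt_add_one {α : Type*} [Preorder α] {f : ℕ → α} {m n : ℕ}
    (hf : ∀ k, m ≤ k → k < n → f k < f (k + 1)) : StrictMonoOn f (Set.Icc m n) :=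
  strictMonoOn_of_lt_succ Set.ordConnected_Icc fun k _ hk hk1 => hf k hk.1 (by simpa using hk1.2)

lemma quantLoss_add_mul_le_of_le {τ u x : ℝ} (hux : u ≤ x) (y : ℝ) :
    quantLoss τ u x + τ * (y - x) ≤ quantLoss τ u y := by
  unfold quantLoss
  split_ifs <;> nlinarith

lemma quantLoss_add_sub_one_mul_le_of_le {τ u x : ℝ} (hxu : x ≤ u) (y : ℝ) :
    quantLoss τ u x + (τ - 1) * (y - x) ≤ quantLoss τ u y := by
  unfold quantLoss
  split_ifs <;> nlinarith

lemma hFun_eq_sum_ite {K ℓ : ℕ} (τ w : ℕ → ℝ) (hℓ : ℓ ≤ K) :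
    hFun K τ w ℓ = ∑ k ∈ Icc 1 K, w k * (if k ≤ ℓ then τ k else τ k - 1) := by
  have hIcc : ∀ n, Icc 1 n = Ioc 0 n := Icc_add_one_left_eq_Ioc 0
  rw [hFun, sub_eq_add_neg, ← sum_neg_distrib, Icc_add_one_left_eq_Ioc, hIcc, hIcc,
    ← sum_Ioc_consecutive _ (Nat.zero_le ℓ) hℓ]
  congr 1
  · exact sum_congr rfl fun k hk => by rw [if_pos (mem_Ioc.1 hk).2]
  · refine sum_congr rfl fun k hk => ?_
    rw [if_neg (mem_Ioc.1 hk).1.not_ge]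
    ring

lemma compLoss_add_hFun_mul_le {K ℓ : ℕ} {τ u w : ℕ → ℝ} {x : ℝ} (hℓ : ℓ ≤ K)
    (hw : ∀ k ∈ Icc 1 K, 0 ≤ w k) (hleft : ∀ k ∈ Icc 1 ℓ, u k ≤ x)
    (hright : ∀ k ∈ Icc (ℓ + 1) K, x ≤ u k) (y : ℝ) :
    compLoss K τ u w x + hFun K τ w ℓ * (y - x) ≤ compLoss K τ u w y := by
  rw [hFun_eq_sum_ite τ w hℓ, compLoss, compLoss, sum_mul, ← sum_add_distrib]
  refine sum_le_sum fun k hk => ?_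
  have hk1 := (mem_Icc.1 hk).1
  have hslope : quantLoss (τ k) (u k) x + (if k ≤ ℓ then τ k else τ k - 1) * (y - x)
      ≤ quantLoss (τ k) (u k) y := by
    split_ifs with hkℓ
    · exact quantLoss_add_mul_le_of_le (hleft k (mem_Icc.2 ⟨hk1, hkℓ⟩)) y
    · exact quantLoss_add_sub_one_mul_le_of_le
        (hright k (mem_Icc.2 ⟨by omega, (mem_Icc.1 hk).2⟩)) y
  nlinarith [mul_le_mul_of_nonneg_left hslope (hw k hk)]

lemma prox_unique_minimizer_of_subgradient {f : ℝ → ℝ} {b g z : ℝ} (hb : 0 ≤ b)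
    (hg : ∀ y, f (z - b * g) + g * (y - (z - b * g)) ≤ f y) :
    (∀ y, b * f (z - b * g) + (z - b * g - z) ^ 2 / 2 ≤ b * f y + (y - z) ^ 2 / 2) ∧
    (∀ x, (∀ y, b * f x + (x - z) ^ 2 / 2 ≤ b * f y + (y - z) ^ 2 / 2) → x = z - b * g) := by
  have hstrong : ∀ y, b * f (z - b * g) + (z - b * g - z) ^ 2 / 2 + (y - (z - b * g)) ^ 2 / 2
      ≤ b * f y + (y - z) ^ 2 / 2 := fun y => by
    nlinarith [mul_le_mul_of_nonneg_left (hg y) hb]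
  refine ⟨fun y => by nlinarith [hstrong y, sq_nonneg (y - (z - b * g))], fun x hx => ?_⟩
  have : (x - (z - b * g)) ^ 2 ≤ 0 := by linarith [hx (z - b * g), hstrong x]
  nlinarith [sq_nonneg (x - (z - b * g))]

theorem prox_composite_quantile_on_open_piece_general
    (K : ℕ) (τ u w : ℕ → ℝ)
    (humono : ∀ k, 1 ≤ k → k < K → u k < u (k + 1))
    (hw : ∀ k ∈ Finset.Icc 1 K, 0 ≤ w k)
    (b : ℝ) (hb : 0 < b)
    (ℓ : ℕ) (hℓ : ℓ ≤ K) (z : ℝ)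
    (hz1 : 1 ≤ ℓ → u ℓ + b * hFun K τ w ℓ < z)
    (hz2 : ℓ < K → z < u (ℓ + 1) + b * hFun K τ w ℓ) :
    (∀ y : ℝ,
        b * compLoss K τ u w (z - b * hFun K τ w ℓ) + (z - b * hFun K τ w ℓ - z) ^ 2 / 2
          ≤ b * compLoss K τ u w y + (y - z) ^ 2 / 2) ∧
    (∀ x : ℝ, (∀ y : ℝ, b * compLoss K τ u w x + (x - z) ^ 2 / 2
          ≤ b * compLoss K τ u w y + (y - z) ^ 2 / 2) → x = z - b * hFun K τ w ℓ) := by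
  have hu := (strictMonoOn_Icc_of_lt_add_one humono).monotoneOn
  have hleft : ∀ k ∈ Icc 1 ℓ, u k ≤ z - b * hFun K τ w ℓ := fun k hk => by
    obtain ⟨hk1, hkℓ⟩ := mem_Icc.1 hk
    have := hu ⟨hk1, hkℓ.trans hℓ⟩ ⟨hk1.trans hkℓ, hℓ⟩ hkℓ
    linarith [hz1 (hk1.trans hkℓ)]
  have hright : ∀ k ∈ Icc (ℓ + 1) K, z - b * hFun K τ w ℓ ≤ u k := fun k hk => by
    obtain ⟨hℓk, hkK⟩ := mem_Icc.1 hk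
    have := hu ⟨by omega, by omega⟩ ⟨by omega, hkK⟩ hℓk
    linarith [hz2 (by omega)]
  exact prox_unique_minimizer_of_subgradient hb.le (compLoss_add_hFun_mul_le hℓ hw hleft hright)

theorem prox_composite_quantile_on_open_piece
    (K : ℕ) (hK : 1 ≤ K) (τ u w : ℕ → ℝ)
    (hτ0 : ∀ k ∈ Finset.Icc 1 K, 0 < τ k) (hτ1 : ∀ k ∈ Finset.Icc 1 K, τ k < 1)
    (hτmono : ∀ k, 1 ≤ k → k < K → τ k < τ (k + 1))
    (humono : ∀ k, 1 ≤ k → k < K → u k < u (k + 1))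
    (hw : ∀ k ∈ Finset.Icc 1 K, 0 ≤ w k)
    (hwsum : ∑ k ∈ Finset.Icc 1 K, w k = 1)
    (b : ℝ) (hb : 0 < b)
    (ℓ : ℕ) (hℓ : ℓ ≤ K) (z : ℝ)
    (hz1 : 1 ≤ ℓ → u ℓ + b * hFun K τ w ℓ < z)
    (hz2 : ℓ < K → z < u (ℓ + 1) + b * hFun K τ w ℓ) :
    (∀ y : ℝ,
        b * compLoss K τ u w (z - b * hFun K τ w ℓ) + (z - b * hFun K τ w ℓ - z) ^ 2 / 2
          ≤ b * compLoss K τ u w y + (y - z) ^ 2 / 2) ∧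
    (∀ x : ℝ, (∀ y : ℝ, b * compLoss K τ u w x + (x - z) ^ 2 / 2
          ≤ b * compLoss K τ u w y + (y - z) ^ 2 / 2) → x = z - b * hFun K τ w ℓ) :=
  prox_composite_quantile_on_open_piece_general K τ u w humono hw b hb ℓ hℓ z hz1 hz2
end

section
/- Assume b > 0. For every ℓ ∈ {1, …, K} and every z with u_ℓ + b·h(ℓ−1) ≤ z ≤ u_ℓ + b·h(ℓ), the point x* = u_ℓ is the unique minimizer over ℝ of the function x ↦ b·ρ_C(x) + (x − z)²/2. -/
lemma ql_ge_hi (t c y : ℝ) (ht : t ≤ 1) : t * (y - c) ≤ quantLoss t c y := by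
  unfold quantLoss
  split_ifs with h
  · nlinarith
  · push_neg at h; nlinarith

lemma ql_ge_lo (t c y : ℝ) (ht : 0 ≤ t) : (t - 1) * (y - c) ≤ quantLoss t c y := by
  unfold quantLoss
  split_ifs with h
  · nlinarith
  · push_neg at h; nlinarith

lemma ql_at_gt (t c x : ℝ) (h : c < x) : quantLoss t c x = t * (x - c) := by
  unfold quantLoss; rw [if_neg (not_le.mpr h)]; ring

lemma ql_at_le (t c x : ℝ) (h : x ≤ c) : quantLoss t c x = (t - 1) * (x - c) := by
  unfold quantLoss; rw [if_pos h]; ring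

lemma ql_self (t c : ℝ) : quantLoss t c c = 0 := by
  unfold quantLoss; simp

lemma sum_icc_pop_bot (a K : ℕ) (h : a ≤ K) (f : ℕ → ℝ) :
    ∑ k ∈ Finset.Icc a K, f k = f a + ∑ k ∈ Finset.Icc (a + 1) K, f k := by
  rw [← Finset.Ioc_insert_left h, Finset.sum_insert Finset.left_notMem_Ioc, Finset.Icc_add_one_left_eq_Ioc]

lemma sum_icc_split (K ℓ : ℕ) (hℓ1 : 1 ≤ ℓ) (hℓ2 : ℓ ≤ K) (f : ℕ → ℝ) :
    ∑ k ∈ Finset.Icc 1 K, f k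
      = (∑ k ∈ Finset.Icc 1 (ℓ - 1), f k) + f ℓ + ∑ k ∈ Finset.Icc (ℓ + 1) K, f k := by
  obtain ⟨m, rfl⟩ : ∃ m, ℓ = m + 1 := ⟨ℓ - 1, (Nat.succ_pred_eq_of_pos hℓ1).symm⟩
  simp only [Nat.add_sub_cancel]
  rw [show Finset.Icc 1 K = Finset.Ioc 0 K from (Finset.Icc_add_one_left_eq_Ioc 0 K).symm ▸ rfl,
    show Finset.Icc 1 m = Finset.Ioc 0 m from (Finset.Icc_add_one_left_eq_Ioc 0 m).symm ▸ rfl,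
    show Finset.Icc (m + 1 + 1) K = Finset.Ioc (m + 1) K from
      (Finset.Icc_add_one_left_eq_Ioc (m + 1) K).symm ▸ rfl,
    ← Finset.sum_Ioc_consecutive f (Nat.zero_le (m + 1)) hℓ2,
    Finset.sum_Ioc_succ_top (Nat.zero_le m)]

set_option maxHeartbeats 1000000 in
theorem prox_composite_quantile_at_knot
    (K : ℕ) (hK : 1 ≤ K) (τ u w : ℕ → ℝ)
    (hτ0 : ∀ k ∈ Finset.Icc 1 K, 0 < τ k) (hτ1 : ∀ k ∈ Finset.Icc 1 K, τ k < 1)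
    (hτmono : ∀ k, 1 ≤ k → k < K → τ k < τ (k + 1))
    (humono : ∀ k, 1 ≤ k → k < K → u k < u (k + 1))
    (hw : ∀ k ∈ Finset.Icc 1 K, 0 ≤ w k)
    (hwsum : ∑ k ∈ Finset.Icc 1 K, w k = 1)
    (b : ℝ) (hb : 0 < b)
    (ℓ : ℕ) (hℓ1 : 1 ≤ ℓ) (hℓ2 : ℓ ≤ K) (z : ℝ)
    (hz1 : u ℓ + b * hFun K τ w (ℓ - 1) ≤ z)
    (hz2 : z ≤ u ℓ + b * hFun K τ w ℓ) :
    (∀ y : ℝ,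
        b * compLoss K τ u w (u ℓ) + (u ℓ - z) ^ 2 / 2
          ≤ b * compLoss K τ u w y + (y - z) ^ 2 / 2) ∧
    (∀ x : ℝ, (∀ y : ℝ, b * compLoss K τ u w x + (x - z) ^ 2 / 2
          ≤ b * compLoss K τ u w y + (y - z) ^ 2 / 2) → x = u ℓ) := by
  -- strict monotonicity of u on [1, K]
  have hult : ∀ j i : ℕ, 1 ≤ i → i < j → j ≤ K → u i < u j := by
    intro j
    induction j with
    | zero => intro i _ h _; omega
    | succ n ih =>
      intro i h1 h2 h3
      rcases Nat.lt_succ_iff_lt_or_eq.mp h2 with h | rfl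
      · exact (ih i h1 h (by omega)).trans (humono n (by omega) (by omega))
      · exact humono i h1 (by omega)
  have hℓmem : ℓ ∈ Finset.Icc 1 K := Finset.mem_Icc.mpr ⟨hℓ1, hℓ2⟩
  have hwℓ : 0 ≤ w ℓ := hw ℓ hℓmem
  have hτℓ0 : 0 < τ ℓ := hτ0 ℓ hℓmem
  have hτℓ1 : τ ℓ < 1 := hτ1 ℓ hℓmem
  set g : ℝ := (z - u ℓ) / b with hg
  have hgl : hFun K τ w (ℓ - 1) ≤ g := by
    rw [hg, le_div_iff₀ hb]; linarith
  have hgu : g ≤ hFun K τ w ℓ := by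
    rw [hg, div_le_iff₀ hb]; linarith
  have hbg : b * g = z - u ℓ := by
    rw [hg]; field_simp
  -- h(ℓ) = h(ℓ-1) + w ℓ
  have hdiff : hFun K τ w ℓ = hFun K τ w (ℓ - 1) + w ℓ := by
    obtain ⟨m, rfl⟩ : ∃ m, ℓ = m + 1 := ⟨ℓ - 1, (Nat.succ_pred_eq_of_pos hℓ1).symm⟩
    unfold hFun
    simp only [Nat.add_sub_cancel]
    rw [Finset.sum_Icc_succ_top (by omega : 1 ≤ m + 1),
      sum_icc_pop_bot (m + 1) K hℓ2 (fun k => w k * (1 - τ k))]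
    ring
  -- choice of the subgradient slope at k = ℓ
  set σ : ℝ := if w ℓ = 0 then τ ℓ
      else (g - hFun K τ w (ℓ - 1)) / w ℓ - (1 - τ ℓ) with hσdef
  have hσfacts : (τ ℓ - 1 ≤ σ ∧ σ ≤ τ ℓ) ∧
      hFun K τ w (ℓ - 1) + w ℓ * (1 - τ ℓ) + w ℓ * σ = g := by
    by_cases h0 : w ℓ = 0
    · rw [hσdef, if_pos h0]
      refine ⟨⟨by linarith, le_refl _⟩, ?_⟩
      rw [h0]; rw [hdiff, h0] at hgu; linarith
    · have hwpos : 0 < w ℓ := lt_of_le_of_ne hwℓ (Ne.symm h0)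
      rw [hσdef, if_neg h0]
      have hq0 : 0 ≤ (g - hFun K τ w (ℓ - 1)) / w ℓ :=
        div_nonneg (by linarith) hwℓ
      have hq1 : (g - hFun K τ w (ℓ - 1)) / w ℓ ≤ 1 := by
        rw [div_le_one hwpos]; rw [hdiff] at hgu; linarith
      have hc : w ℓ * ((g - hFun K τ w (ℓ - 1)) / w ℓ) = g - hFun K τ w (ℓ - 1) :=
        mul_div_cancel₀ _ h0
      exact ⟨⟨by linarith, by linarith⟩, by nlinarith⟩
  obtain ⟨⟨hσlo, hσhi⟩, hσeq⟩ := hσfacts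
  -- slope function
  set t : ℕ → ℝ := fun k => if k < ℓ then τ k else if k = ℓ then σ else τ k - 1 with ht
  -- the slopes sum (weighted) to g
  have hsum : ∑ k ∈ Finset.Icc 1 K, w k * t k = g := by
    rw [sum_icc_split K ℓ hℓ1 hℓ2 (fun k => w k * t k)]
    have e1 : ∑ k ∈ Finset.Icc 1 (ℓ - 1), w k * t k
        = ∑ k ∈ Finset.Icc 1 (ℓ - 1), w k * τ k := by
      apply Finset.sum_congr rfl
      intro k hk
      obtain ⟨_, hk2⟩ := Finset.mem_Icc.mp hk
      rw [ht]; simp only []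
      rw [if_pos (by omega : k < ℓ)]
    have e2 : t ℓ = σ := by rw [ht]; simp
    have e3 : ∑ k ∈ Finset.Icc (ℓ + 1) K, w k * t k
        = - ∑ k ∈ Finset.Icc (ℓ + 1) K, w k * (1 - τ k) := by
      rw [← Finset.sum_neg_distrib]
      apply Finset.sum_congr rfl
      intro k hk
      obtain ⟨hk1, _⟩ := Finset.mem_Icc.mp hk
      rw [ht]; simp only []
      rw [if_neg (by omega : ¬ k < ℓ), if_neg (by omega : ¬ k = ℓ)]
      ring
    rw [e1, e2, e3]
    have hH : hFun K τ w (ℓ - 1)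
        = ∑ k ∈ Finset.Icc 1 (ℓ - 1), w k * τ k
          - (w ℓ * (1 - τ ℓ) + ∑ k ∈ Finset.Icc (ℓ + 1) K, w k * (1 - τ k)) := by
      obtain ⟨m, rfl⟩ : ∃ m, ℓ = m + 1 := ⟨ℓ - 1, (Nat.succ_pred_eq_of_pos hℓ1).symm⟩
      unfold hFun
      simp only [Nat.add_sub_cancel]
      rw [sum_icc_pop_bot (m + 1) K hℓ2 (fun k => w k * (1 - τ k))]
    rw [hH] at hσeq
    linarith
  -- key subgradient inequality
  have key : ∀ y : ℝ, g * (y - u ℓ) ≤ compLoss K τ u w y - compLoss K τ u w (u ℓ) := by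
    intro y
    have hterm : ∀ k ∈ Finset.Icc 1 K,
        w k * t k * (y - u ℓ)
          ≤ w k * quantLoss (τ k) (u k) y - w k * quantLoss (τ k) (u k) (u ℓ) := by
      intro k hk
      obtain ⟨hk1, hk2⟩ := Finset.mem_Icc.mp hk
      have hwk : 0 ≤ w k := hw k hk
      have hτk0 : 0 < τ k := hτ0 k hk
      have hτk1 : τ k < 1 := hτ1 k hk
      by_cases hkl : k < ℓ
      · rw [ht]; simp only []
        rw [if_pos hkl]
        have huk : u k < u ℓ := hult ℓ k hk1 hkl hℓ2
        rw [ql_at_gt (τ k) (u k) (u ℓ) huk]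
        have h1 : τ k * (y - u k) ≤ quantLoss (τ k) (u k) y := ql_ge_hi _ _ _ hτk1.le
        nlinarith [mul_le_mul_of_nonneg_left h1 hwk]
      · by_cases hke : k = ℓ
        · subst hke
          rw [ht]; simp only [lt_irrefl, if_false, eq_self_iff_true, if_true, ql_self]
          have hq : σ * (y - u k) ≤ quantLoss (τ k) (u k) y := by
            by_cases hy : y ≤ u k
            · rw [ql_at_le (τ k) (u k) y hy]; nlinarith
            · push_neg at hy
              rw [ql_at_gt (τ k) (u k) y hy]; nlinarith
          nlinarith [mul_le_mul_of_nonneg_left hq hwk]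
        · have hlk : ℓ < k := by omega
          rw [ht]; simp only []
          rw [if_neg hkl, if_neg hke]
          have huk : u ℓ < u k := hult k ℓ hℓ1 hlk hk2
          rw [ql_at_le (τ k) (u k) (u ℓ) huk.le]
          have h1 : (τ k - 1) * (y - u k) ≤ quantLoss (τ k) (u k) y := ql_ge_lo _ _ _ hτk0.le
          nlinarith [mul_le_mul_of_nonneg_left h1 hwk]
    calc g * (y - u ℓ) = (∑ k ∈ Finset.Icc 1 K, w k * t k) * (y - u ℓ) := by rw [hsum]
      _ = ∑ k ∈ Finset.Icc 1 K, w k * t k * (y - u ℓ) := by rw [Finset.sum_mul]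
      _ ≤ ∑ k ∈ Finset.Icc 1 K,
            (w k * quantLoss (τ k) (u k) y - w k * quantLoss (τ k) (u k) (u ℓ)) :=
          Finset.sum_le_sum hterm
      _ = compLoss K τ u w y - compLoss K τ u w (u ℓ) := by
          rw [Finset.sum_sub_distrib]; rfl
  -- strong minimality
  have strong : ∀ y : ℝ,
      b * compLoss K τ u w (u ℓ) + (u ℓ - z) ^ 2 / 2 + (y - u ℓ) ^ 2 / 2
        ≤ b * compLoss K τ u w y + (y - z) ^ 2 / 2 := by
    intro y
    have hk := key y
    have h2 : (z - u ℓ) * (y - u ℓ)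
        ≤ b * (compLoss K τ u w y - compLoss K τ u w (u ℓ)) := by
      calc (z - u ℓ) * (y - u ℓ) = (b * g) * (y - u ℓ) := by rw [hbg]
        _ = b * (g * (y - u ℓ)) := by ring
        _ ≤ b * (compLoss K τ u w y - compLoss K τ u w (u ℓ)) :=
            mul_le_mul_of_nonneg_left hk hb.le
    nlinarith [h2]
  constructor
  · intro y
    have := strong y
    nlinarith [sq_nonneg (y - u ℓ)]
  · intro x hx
    have h1 := hx (u ℓ)
    have h2 := strong x
    have h3 : (x - u ℓ) ^ 2 = 0 := le_antisymm (by linarith) (sq_nonneg _)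
    have h4 : x - u ℓ = 0 := by
      exact pow_eq_zero_iff (two_ne_zero) |>.mp h3
    linarith
end

section
/- Let Z₁ and Z₂ be independent standard normal random variables, let m₁, m₂, a, b ∈ ℝ and σ > 0, and set X₁ = m₁ + σ Z₁ and X₂ = m₂ + a Z₁ + b Z₂ (so that Cov(X₁, X₂) = σa). Let φ : ℝ → ℝ be locally integrable and define g(x) = g(0) + ∫₀ˣ φ(t) dt. Assume that g(X₁), g(X₁)·X₂ and φ(X₁) are integrable. Then E[g(X₁)(X₂ − m₂)] = σ a · E[φ(X₁)], i.e. Cov(g(X₁), X₂) = Cov(X₁, X₂) · E[φ(X₁)]. -/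
/-!
Stein's identity for `N(m, v)` with `v ≠ 0`: write `(x - m) ∫_m^x φ` as `∫ |x - m| 1{t ∈ Ι m x} φ(t) dt`
and exchange the integrals, which is legitimate because the kernel is nonnegative. For fixed `t` the
kernel integrates against `N(m, v)` to a tail of the first moment, `∫_{x ≥ t} (x - m)` if `t > m` and
`∫_{x < t} (m - x)` if `t ≤ m`; both equal `v p(t)` because `(x - m) p(x) = -v p'(x)` for the density
`p`. Hence `E[(X - m) g(X)] = v E[φ(X)]` for `X ~ N(m, v)`.

Here `X₁ ~ N(m₁, σ²)`, `a Z₁ = (a / σ) (X₁ - m₁)`, and `Z₂` is centred and independent of `g(X₁)`,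
so `E[g(X₁)(X₂ - m₂)] = (a / σ) σ² E[φ(X₁)]`.
-/

open MeasureTheory ProbabilityTheory Set Filter Topology
open scoped NNReal Interval

section Kernel

variable {α β : Type*} [MeasurableSpace α] [MeasurableSpace β] {μ : Measure α} {ν : Measure β}
  [SFinite μ] [SFinite ν]

theorem integrable_prod_kernel_mul {k : α → β → ℝ} {ψ : β → ℝ}
    (hk : AEStronglyMeasurable (Function.uncurry k) (μ.prod ν)) (hk_nonneg : ∀ x y, 0 ≤ k x y)
    (hk_int : ∀ y, Integrable (k · y) μ) (hψ : AEStronglyMeasurable ψ ν)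
    (hψk : Integrable (fun y => ψ y * ∫ x, k x y ∂μ) ν) :
    Integrable (fun z : α × β => k z.1 z.2 * ψ z.2) (μ.prod ν) := by
  have hkψ : AEStronglyMeasurable (fun z : α × β => k z.1 z.2 * ψ z.2) (μ.prod ν) :=
    hk.mul hψ.comp_snd
  refine (integrable_prod_iff' hkψ).2
    ⟨ae_of_all _ fun y => (hk_int y).mul_const (ψ y), hψk.norm.congr (ae_of_all _ fun y => ?_)⟩
  simp only [norm_mul, Real.norm_of_nonneg (hk_nonneg _ _), integral_mul_const,
    Real.norm_of_nonneg (integral_nonneg (hk_nonneg · y))]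
  ring

end Kernel

section Primitive

variable {φ g : ℝ → ℝ} {a : ℝ}

lemma MeasureTheory.LocallyIntegrable.intervalIntegral_eq_sub_of_eq_add (hφ : LocallyIntegrable φ)
    (hg : ∀ x, g x = g a + ∫ t in a..x, φ t) (b c : ℝ) : ∫ t in b..c, φ t = g c - g b := by
  have hφi (x y : ℝ) : IntervalIntegrable φ volume x y :=
    (hφ.integrableOn_isCompact isCompact_uIcc).intervalIntegrable
  rw [hg c, hg b, ← intervalIntegral.integral_add_adjacent_intervals (hφi a b) (hφi b c)]
  ring

lemma MeasureTheory.LocallyIntegrable.continuous_of_eq_add (hφ : LocallyIntegrable φ)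
    (hg : ∀ x, g x = g a + ∫ t in a..x, φ t) : Continuous g := by
  rw [funext hg]
  exact continuous_const.add (intervalIntegral.continuous_primitive
    (fun x y => (hφ.integrableOn_isCompact isCompact_uIcc).intervalIntegrable) a)

end Primitive

namespace ProbabilityTheory

lemma hasDerivAt_gaussianPDFReal (m : ℝ) (v : ℝ≥0) (x : ℝ) :
    HasDerivAt (gaussianPDFReal m v) (-((x - m) / v) * gaussianPDFReal m v x) x := by
  have h : HasDerivAt (fun y => -(y - m) ^ 2 / (2 * v)) (-(2 * (x - m)) / (2 * v)) x := by
    simpa using (((hasDerivAt_id' x).sub_const m).pow 2).neg.div_const (2 * (v : ℝ))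
  refine (h.exp.const_mul (√(2 * Real.pi * v))⁻¹).congr_deriv ?_
  rw [gaussianPDFReal]
  ring

lemma tendsto_gaussianPDFReal_atTop (m : ℝ) {v : ℝ≥0} (hv : v ≠ 0) :
    Tendsto (gaussianPDFReal m v) atTop (𝓝 0) := by
  have hv' : (0 : ℝ) < 2 * v := by positivity
  have h : Tendsto (fun x : ℝ => -(x - m) ^ 2 / (2 * v)) atTop atBot :=
    (tendsto_neg_atTop_atBot.comp ((tendsto_pow_atTop two_ne_zero).comp
      (tendsto_atTop_add_const_right _ (-m) tendsto_id))).atBot_div_const hv'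
  simpa [gaussianPDFReal_def] using
    (Real.tendsto_exp_atBot.comp h).const_mul (√(2 * Real.pi * v))⁻¹

variable {m : ℝ} {v : ℝ≥0}

section Density

variable {E : Type*} [NormedAddCommGroup E] [NormedSpace ℝ E]

lemma integrable_gaussianReal_iff (hv : v ≠ 0) {f : ℝ → E} :
    Integrable f (gaussianReal m v) ↔ Integrable (fun x => gaussianPDFReal m v x • f x) := by
  rw [gaussianReal_of_var_ne_zero _ hv, integrable_withDensity_iff_integrable_smul'
    (measurable_gaussianPDF m v) (ae_of_all _ fun _ => gaussianPDF_lt_top)]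
  simp only [toReal_gaussianPDF]

lemma setIntegral_gaussianReal_eq_setIntegral_smul (hv : v ≠ 0) {f : ℝ → E} {s : Set ℝ}
    (hs : MeasurableSet s) :
    ∫ x in s, f x ∂gaussianReal m v = ∫ x in s, gaussianPDFReal m v x • f x := by
  rw [gaussianReal_of_var_ne_zero _ hv, setIntegral_withDensity_eq_setIntegral_toReal_smul
    (measurable_gaussianPDF m v) (ae_of_all _ fun _ => gaussianPDF_lt_top) _ hs]
  simp only [toReal_gaussianPDF]

end Density

lemma integrable_fun_id_gaussianReal : Integrable (fun x => x) (gaussianReal m v) :=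
  (memLp_id_gaussianReal 1).integrable le_rfl

lemma integrable_sub_gaussianReal : Integrable (fun x => x - m) (gaussianReal m v) :=
  integrable_fun_id_gaussianReal.sub (integrable_const m)

lemma integral_sub_gaussianReal : ∫ x, (x - m) ∂gaussianReal m v = 0 := by
  rw [integral_sub integrable_fun_id_gaussianReal (integrable_const m), integral_id_gaussianReal]
  simp

lemma setIntegral_Ici_sub_gaussianReal (hv : v ≠ 0) (t : ℝ) :
    ∫ x in Ici t, (x - m) ∂gaussianReal m v = v * gaussianPDFReal m v t := by
  have hv' : (v : ℝ) ≠ 0 := by exact_mod_cast hv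
  have hderiv (x : ℝ) : HasDerivAt (fun x => -(v * gaussianPDFReal m v x))
      (gaussianPDFReal m v x • (x - m)) x :=
    ((hasDerivAt_gaussianPDFReal m v x).const_mul (v : ℝ)).neg.congr_deriv (by field_simp; ring)
  rw [setIntegral_gaussianReal_eq_setIntegral_smul hv measurableSet_Ici,
    integral_Ici_eq_integral_Ioi, integral_Ioi_of_hasDerivAt_of_tendsto' (fun x _ => hderiv x)
      ((integrable_gaussianReal_iff hv).1 integrable_sub_gaussianReal).integrableOn
      (by simpa using ((tendsto_gaussianPDFReal_atTop m hv).const_mul (v : ℝ)).neg)]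
  ring

lemma setIntegral_Iio_sub_gaussianReal (hv : v ≠ 0) (t : ℝ) :
    ∫ x in Iio t, (x - m) ∂gaussianReal m v = -(v * gaussianPDFReal m v t) := by
  have h := integral_add_compl (measurableSet_Ici (a := t))
    (integrable_sub_gaussianReal (m := m) (v := v))
  rw [compl_Ici, setIntegral_Ici_sub_gaussianReal hv, integral_sub_gaussianReal] at h
  linarith

noncomputable def steinKernel (m x t : ℝ) : ℝ := |x - m| * (Ι m x).indicator 1 t

lemma steinKernel_nonneg (m x t : ℝ) : 0 ≤ steinKernel m x t :=
  mul_nonneg (abs_nonneg _) (indicator_nonneg (fun _ _ => zero_le_one) _)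

lemma measurable_steinKernel (m : ℝ) : Measurable (Function.uncurry (steinKernel m)) := by
  have hS : MeasurableSet {p : ℝ × ℝ | p.2 ∈ Ι m p.1} := by
    simp only [Set.uIoc, mem_Ioc, ofPred_and]
    exact (measurableSet_lt (by fun_prop) (by fun_prop)).inter
      (measurableSet_le (by fun_prop) (by fun_prop))
  exact (by fun_prop : Measurable fun p : ℝ × ℝ => |p.1 - m|).mul (measurable_const.indicator hS)

lemma integral_steinKernel_mul (m x : ℝ) (φ : ℝ → ℝ) :
    ∫ t, steinKernel m x t * φ t = (x - m) * ∫ t in m..x, φ t := by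
  simp only [steinKernel, mul_assoc, integral_const_mul, ← indicator_mul_left, Pi.one_apply,
    one_mul]
  rw [integral_indicator measurableSet_uIoc, intervalIntegral.intervalIntegral_eq_integral_uIoc]
  rcases le_or_gt m x with h | h
  · simp [h, abs_of_nonneg (sub_nonneg.2 h)]
  · simp [h.not_ge, abs_of_neg (sub_neg.2 h)]
    ring

lemma steinKernel_of_lt {t : ℝ} (ht : m < t) :
    (steinKernel m · t) = (Ici t).indicator (fun x => x - m) := by
  ext x
  by_cases hx : t ≤ x
  · simp [steinKernel, hx, ht, mem_uIoc, abs_of_pos (sub_pos.2 (ht.trans_le hx))]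
  · simp [steinKernel, hx, mem_uIoc, ht.not_ge]

lemma steinKernel_of_le {t : ℝ} (ht : t ≤ m) :
    (steinKernel m · t) = (Iio t).indicator (fun x => -(x - m)) := by
  ext x
  by_cases hx : x < t
  · simp [steinKernel, hx, ht, mem_uIoc, abs_of_neg (sub_neg.2 (hx.trans_le ht))]
  · simp [steinKernel, hx, mem_uIoc, ht]

lemma integrable_steinKernel_gaussianReal (t : ℝ) :
    Integrable (steinKernel m · t) (gaussianReal m v) := by
  rcases lt_or_ge m t with ht | ht
  · rw [steinKernel_of_lt ht]
    exact integrable_sub_gaussianReal.indicator measurableSet_Ici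
  · rw [steinKernel_of_le ht]
    exact integrable_sub_gaussianReal.neg.indicator measurableSet_Iio

lemma integral_steinKernel_gaussianReal (hv : v ≠ 0) (t : ℝ) :
    ∫ x, steinKernel m x t ∂gaussianReal m v = v * gaussianPDFReal m v t := by
  rcases lt_or_ge m t with ht | ht
  · rw [steinKernel_of_lt ht, integral_indicator measurableSet_Ici,
      setIntegral_Ici_sub_gaussianReal hv]
  · rw [steinKernel_of_le ht, integral_indicator measurableSet_Iio, integral_neg,
      setIntegral_Iio_sub_gaussianReal hv, neg_neg]

theorem gaussianReal_stein_intervalIntegral (hv : v ≠ 0) {φ : ℝ → ℝ}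
    (hφ : Integrable φ (gaussianReal m v)) :
    Integrable (fun x => (x - m) * ∫ t in m..x, φ t) (gaussianReal m v) ∧
      ∫ x, (x - m) * (∫ t in m..x, φ t) ∂gaussianReal m v = v * ∫ x, φ x ∂gaussianReal m v := by
  have hφk : Integrable (fun t => φ t * ∫ x, steinKernel m x t ∂gaussianReal m v) := by
    simp_rw [integral_steinKernel_gaussianReal hv]
    simpa [mul_comm, mul_left_comm] using ((integrable_gaussianReal_iff hv).1 hφ).const_mul (v : ℝ)
  have hK := integrable_prod_kernel_mul (measurable_steinKernel m).aestronglyMeasurable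
    (steinKernel_nonneg m) integrable_steinKernel_gaussianReal
    (hφ.aestronglyMeasurable.mono_ac (gaussianReal_absolutelyContinuous' m hv)) hφk
  have hrepr : (fun x => (x - m) * ∫ t in m..x, φ t) = fun x => ∫ t, steinKernel m x t * φ t :=
    funext fun x => (integral_steinKernel_mul m x φ).symm
  rw [hrepr]
  refine ⟨hK.integral_prod_left, ?_⟩
  rw [integral_integral_swap (f := fun x t => steinKernel m x t * φ t) hK,
    integral_gaussianReal_eq_integral_smul hv, ← integral_const_mul]
  simp_rw [integral_mul_const, integral_steinKernel_gaussianReal hv, smul_eq_mul]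
  congr 1 with t
  ring

theorem gaussianReal_stein (hv : v ≠ 0) {φ g : ℝ → ℝ} (hφ : Integrable φ (gaussianReal m v))
    (hg : ∀ x, ∫ t in m..x, φ t = g x - g m) :
    Integrable (fun x => (x - m) * g x) (gaussianReal m v) ∧
      ∫ x, (x - m) * g x ∂gaussianReal m v = v * ∫ x, φ x ∂gaussianReal m v := by
  obtain ⟨hint, heq⟩ := gaussianReal_stein_intervalIntegral hv hφ
  have hsplit : (fun x => (x - m) * g x)
      = fun x => g m * (x - m) + (x - m) * ∫ t in m..x, φ t := by
    ext x
    rw [hg x]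
    ring
  have hlin := (integrable_sub_gaussianReal (m := m) (v := v)).const_mul (g m)
  rw [hsplit, integral_add hlin hint, integral_const_mul, integral_sub_gaussianReal, heq]
  exact ⟨hlin.add hint, by ring⟩

section RandomVariables

variable {Ω : Type*} {mΩ : MeasurableSpace Ω} {P : Measure Ω}

lemma hasLaw_of_map_eq {𝓧 : Type*} {m𝓧 : MeasurableSpace 𝓧} {μ : Measure 𝓧} [NeZero μ]
    {X : Ω → 𝓧} (h : P.map X = μ) : HasLaw X μ P :=
  ⟨.of_map_ne_zero (h ▸ NeZero.ne μ), h⟩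

lemma HasLaw.integrable_comp_iff {𝓧 E : Type*} {m𝓧 : MeasurableSpace 𝓧} [NormedAddCommGroup E]
    {μ : Measure 𝓧} {X : Ω → 𝓧} (hX : HasLaw X μ P) {f : 𝓧 → E}
    (hf : AEStronglyMeasurable f μ) : Integrable (f ∘ X) P ↔ Integrable f μ := by
  rw [← hX.map_eq] at hf ⊢
  exact (integrable_map_measure hf hX.aemeasurable).symm

lemma HasLaw.const_add_const_mul_gaussianReal {Z : Ω → ℝ} (hZ : HasLaw Z (gaussianReal 0 1) P)
    (m c : ℝ) : HasLaw (fun ω => m + c * Z ω) (gaussianReal m (.mk (c ^ 2) (sq_nonneg c))) P := by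
  simpa using gaussianReal_const_add (gaussianReal_const_mul hZ c) m

theorem HasLaw.gaussianReal_stein {X : Ω → ℝ} (hX : HasLaw X (gaussianReal m v) P) (hv : v ≠ 0)
    {φ g : ℝ → ℝ} (hφ : Integrable φ (gaussianReal m v)) (hg : ∀ x, ∫ t in m..x, φ t = g x - g m) :
    Integrable (fun ω => (X ω - m) * g (X ω)) P ∧
      ∫ ω, (X ω - m) * g (X ω) ∂P = v * ∫ ω, φ (X ω) ∂P := by
  obtain ⟨hint, heq⟩ := ProbabilityTheory.gaussianReal_stein hv hφ hg
  refine ⟨(hX.integrable_comp_iff hint.1).2 hint, ?_⟩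
  have h₁ := hX.integral_comp hint.1
  have h₂ := hX.integral_comp hφ.1
  simp only [Function.comp_def] at h₁ h₂
  rw [h₁, h₂, heq]

lemma IndepFun.integral_mul_eq_zero_of_hasLaw_gaussianReal {X Y : Ω → ℝ} (hXY : IndepFun X Y P)
    (hX : Integrable X P) (hY : HasLaw Y (gaussianReal 0 v) P) :
    Integrable (fun ω => X ω * Y ω) P ∧ ∫ ω, X ω * Y ω ∂P = 0 := by
  have hY_int : Integrable Y P :=
    (hY.integrable_comp_iff (by fun_prop)).2 integrable_fun_id_gaussianReal
  refine ⟨hXY.integrable_mul hX hY_int, ?_⟩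
  rw [hXY.integral_fun_mul_eq_mul_integral hX.1 hY_int.1, hY.integral_eq, integral_id_gaussianReal,
    mul_zero]

end RandomVariables

end ProbabilityTheory

theorem stein_lemma_jointly_gaussian_general
    {Ω : Type*} [MeasureSpace Ω]
    (Z₁ Z₂ : Ω → ℝ)
    (hZ₁ : Measure.map Z₁ volume = gaussianReal 0 1)
    (hZ₂ : Measure.map Z₂ volume = gaussianReal 0 1)
    (hindep : IndepFun Z₁ Z₂ volume)
    (m₁ m₂ a b σ : ℝ) (hσ : 0 < σ)
    (X₁ X₂ : Ω → ℝ)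
    (hX₁ : ∀ ω, X₁ ω = m₁ + σ * Z₁ ω)
    (hX₂ : ∀ ω, X₂ ω = m₂ + a * Z₁ ω + b * Z₂ ω)
    (φ : ℝ → ℝ) (hφ : LocallyIntegrable φ volume)
    (g : ℝ → ℝ) (hg : ∀ x : ℝ, g x = g 0 + ∫ t in (0 : ℝ)..x, φ t)
    (hint₁ : Integrable (fun ω => g (X₁ ω)) volume)
    (hint₃ : Integrable (fun ω => φ (X₁ ω)) volume) :
    ∫ ω, g (X₁ ω) * (X₂ ω - m₂) = σ * a * ∫ ω, φ (X₁ ω) := by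
  have hX₁law : HasLaw X₁ (gaussianReal m₁ (.mk (σ ^ 2) (sq_nonneg σ))) := by
    simpa only [← hX₁] using (hasLaw_of_map_eq hZ₁).const_add_const_mul_gaussianReal m₁ σ
  have hv : NNReal.mk (σ ^ 2) (sq_nonneg σ) ≠ 0 := by
    simpa [← NNReal.coe_ne_zero] using hσ.ne'
  have hφ_law := (hX₁law.integrable_comp_iff
    (hφ.aestronglyMeasurable.mono_ac (gaussianReal_absolutelyContinuous m₁ hv))).1 hint₃
  obtain ⟨hA_int, hA⟩ :=
    hX₁law.gaussianReal_stein hv hφ_law (hφ.intervalIntegral_eq_sub_of_eq_add hg m₁)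
  have hind : IndepFun (fun ω => g (X₁ ω)) Z₂ := by
    simp only [hX₁]
    exact hindep.comp (φ := fun z => g (m₁ + σ * z))
      ((hφ.continuous_of_eq_add hg).measurable.comp (by fun_prop)) measurable_id
  obtain ⟨hB_int, hB⟩ :=
    hind.integral_mul_eq_zero_of_hasLaw_gaussianReal hint₁ (hasLaw_of_map_eq hZ₂)
  have hsplit : (fun ω => g (X₁ ω) * (X₂ ω - m₂))
      = fun ω => a / σ * ((X₁ ω - m₁) * g (X₁ ω)) + b * (g (X₁ ω) * Z₂ ω) := by
    ext ω
    rw [hX₂, hX₁]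
    field_simp
    ring
  rw [hsplit, integral_add (hA_int.const_mul _) (hB_int.const_mul _),
    integral_const_mul, integral_const_mul, hA, hB, NNReal.coe_mk]
  field_simp
  ring

theorem stein_lemma_jointly_gaussian
    {Ω : Type*} [MeasureSpace Ω] [IsProbabilityMeasure (volume : Measure Ω)]
    (Z₁ Z₂ : Ω → ℝ) (hZ₁m : Measurable Z₁) (hZ₂m : Measurable Z₂)
    (hZ₁ : Measure.map Z₁ volume = gaussianReal 0 1)
    (hZ₂ : Measure.map Z₂ volume = gaussianReal 0 1)
    (hindep : IndepFun Z₁ Z₂ volume)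
    (m₁ m₂ a b σ : ℝ) (hσ : 0 < σ)
    (X₁ X₂ : Ω → ℝ)
    (hX₁ : ∀ ω, X₁ ω = m₁ + σ * Z₁ ω)
    (hX₂ : ∀ ω, X₂ ω = m₂ + a * Z₁ ω + b * Z₂ ω)
    (φ : ℝ → ℝ) (hφ : LocallyIntegrable φ volume)
    (g : ℝ → ℝ) (hg : ∀ x : ℝ, g x = g 0 + ∫ t in (0 : ℝ)..x, φ t)
    (hint₁ : Integrable (fun ω => g (X₁ ω)) volume)
    (hint₂ : Integrable (fun ω => g (X₁ ω) * X₂ ω) volume)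
    (hint₃ : Integrable (fun ω => φ (X₁ ω)) volume) :
    ∫ ω, g (X₁ ω) * (X₂ ω - m₂) = σ * a * ∫ ω, φ (X₁ ω) :=
  stein_lemma_jointly_gaussian_general Z₁ Z₂ hZ₁ hZ₂ hindep m₁ m₂ a b σ hσ X₁ X₂ hX₁ hX₂ φ hφ g hg
    hint₁ hint₃
end
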